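/- Let α ∈ {−1,1} and let Q'₃ be the real quadratic form on ℂ × ℝ given by Q'₃(w,s) = α·|w|² − s², with Clifford algebra Cl₃(α) and canonical embedding ι. Set E₁ = ι(1,0), E₂ = ι(i,0), E₃ = ι(0,1). There exists an injective group homomorphism ψ_α : O₂(α) → (Cl₃(α))ˣ such that for z = x + iy ∈ Circle: ψ_α(z,0̂) = x·1 + y·E₁E₂ and ψ_α(z,1̂) = (x·1 + y·E₁E₂)·E₁E₃; every ψ_α(g) lies in the even part of Cl₃(α); and for all w ∈ ℂ, s ∈ ℝ: ψ_α(z,0̂)·ι(w,s)·ψ_α(z,0̂)⁻¹ = ι(z^{−2α}·w, s) and ψ_α(z,1̂)·ι(w,s)·ψ_α(z,1̂)⁻¹ = ι(−z^{−2α}·conj(w), −s), where z^{−2α} means conj(z)² when α = +1 and z² when α = −1. (This realizes O₂(α) ≅ Pin₂(α) as the spin group Spin₃(α), with vector representation given by Σ_α(R) = ((det R)·R) ⊕ (det R) applied to the image under Φ₀^{(−α)} ∘ σ_α.) -/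

import Mathlib

set_option linter.unnecessarySeqFocus false

open Complex

/-- Complex conjugation as a group endomorphism of the circle group. -/
noncomputable def conjC : Circle →* Circle where
  toFun z := ⟨(starRingEnd ℂ) (z : ℂ), by
    simp only [Submonoid.unitSphere, Metric.mem_sphere, dist_zero_right]
    simp [Circle.norm_coe]⟩
  map_one' := by ext; simp
  map_mul' a b := by ext; simp; rfl

@[simp] lemma conjC_coe (z : Circle) : (conjC z : ℂ) = (starRingEnd ℂ) (z : ℂ) := rfl

@[simp] lemma conjC_conjC (z : Circle) : conjC (conjC z) = z := by
  ext; simp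

/-- The element `-1` of the circle group. -/
noncomputable def negOneC : Circle := ⟨-1, by
  simp only [Submonoid.unitSphere, Metric.mem_sphere, dist_zero_right]
  simp⟩

@[simp] lemma negOneC_coe : (negOneC : ℂ) = -1 := rfl

/-- The sign `α = ±1` as an element of the circle group. -/
noncomputable def sgnC (α : ℤˣ) : Circle := if α = 1 then 1 else negOneC

/-- The underlying type of a twisted extension of `ℤ₂ = {0̂, 1̂}` by a commutative group `A`,
with twisting endomorphism `τ` and cocycle value `a₀`.  An element `⟨z, t⟩` stands for the
pair `(z, t)`.  The group `O₂(α)` of the paper is the case `A = Circle`, `τ` = complex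
conjugation, `a₀ = α = ±1`. -/
@[ext]
structure Tw (A : Type*) [CommGroup A] (τ : A →* A) (a₀ : A) where
  z : A
  t : ZMod 2

namespace Tw

variable {A : Type*} [CommGroup A] {τ : A →* A} {a₀ : A}

/-- The multiplication `(z₁,0̂)(z₂,t) = (z₁z₂, t)`, `(z₁,1̂)(z₂,0̂) = (z₁·τ(z₂), 1̂)`,
`(z₁,1̂)(z₂,1̂) = (a₀·z₁·τ(z₂), 0̂)`. -/
instance : Mul (Tw A τ a₀) :=
  ⟨fun g h => ⟨(if g.t = 1 ∧ h.t = 1 then a₀ else 1) * g.z * (if g.t = 1 then τ h.z else h.z),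
    g.t + h.t⟩⟩

/-- The unit `(1, 0̂)`. -/
instance : One (Tw A τ a₀) := ⟨⟨1, 0⟩⟩

instance : Inv (Tw A τ a₀) := ⟨fun g => ⟨if g.t = 1 then a₀⁻¹ * τ g.z⁻¹ else g.z⁻¹, g.t⟩⟩

@[simp] lemma mul_z (g h : Tw A τ a₀) :
    (g * h).z = (if g.t = 1 ∧ h.t = 1 then a₀ else 1) * g.z * (if g.t = 1 then τ h.z else h.z) :=
  rfl

@[simp] lemma mul_t (g h : Tw A τ a₀) : (g * h).t = g.t + h.t := rfl

@[simp] lemma one_z : (1 : Tw A τ a₀).z = 1 := rfl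
@[simp] lemma one_t : (1 : Tw A τ a₀).t = 0 := rfl

@[simp] lemma inv_z (g : Tw A τ a₀) :
    (g⁻¹).z = if g.t = 1 then a₀⁻¹ * τ g.z⁻¹ else g.z⁻¹ := rfl
@[simp] lemma inv_t (g : Tw A τ a₀) : (g⁻¹).t = g.t := rfl

lemma zmod2_cases : ∀ t : ZMod 2, t = 0 ∨ t = 1 := by decide

instance group [Fact (∀ a : A, τ (τ a) = a)] [Fact (τ a₀ = a₀)] : Group (Tw A τ a₀) := by
  have hττ := Fact.out (p := ∀ a : A, τ (τ a) = a)
  have hτa := Fact.out (p := τ a₀ = a₀)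
  refine Group.ofLeftAxioms ?_ ?_ ?_
  · rintro ⟨z₁, t₁⟩ ⟨z₂, t₂⟩ ⟨z₃, t₃⟩
    rcases zmod2_cases t₁ with rfl | rfl <;> rcases zmod2_cases t₂ with rfl | rfl <;>
      rcases zmod2_cases t₃ with rfl | rfl <;> ext <;>
      simp [hττ, hτa, map_mul, mul_comm, mul_assoc, mul_left_comm] <;> decide
  · rintro ⟨z, t⟩
    ext <;> simp
  · rintro ⟨z, t⟩
    rcases zmod2_cases t with rfl | rfl <;> ext <;>
      simp [hττ, hτa, map_mul, mul_comm, mul_assoc, mul_left_comm] <;> decide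

end Tw

instance : Fact (∀ a : Circle, conjC (conjC a) = a) := ⟨conjC_conjC⟩

instance (α : ℤˣ) : Fact (conjC (sgnC α) = sgnC α) := ⟨by
  rcases Int.units_eq_one_or α with rfl | rfl <;> ext <;> simp [sgnC, negOneC] <;>
    exact (conjC_coe _).trans (by simp : (starRingEnd ℂ) (-1 : ℂ) = -1)⟩

/-- The group `O₂(α)` for a sign `α ∈ {−1, 1}`: underlying set `Circle × ℤ₂` with the
twisted multiplication `(z₁,0̂)(z₂,t) = (z₁z₂,t)`, `(z₁,1̂)(z₂,0̂) = (z₁·conj(z₂),1̂)`,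
`(z₁,1̂)(z₂,1̂) = (α·z₁·conj(z₂),0̂)` and unit `(1,0̂)`. -/
abbrev O2 (α : ℤˣ) : Type := Tw Circle conjC (sgnC α)

/-!
The plane `ℂ × 0` and the axis `0 × ℝ` are `Q'`-orthogonal, with `E₁² = E₂² = α` and `E₃² = -1`.
Hence `e₁₂ = E₁E₂` squares to `-1` and `x + iy ↦ x + y e₁₂` embeds `ℂ` into the even subalgebra.
`e₁₂` anticommutes with the plane, on which it acts by `w ↦ -α·i·w`, and commutes with `E₃`; so
conjugating by the image of a unit `z` multiplies plane vectors by `z^{-2α}` and fixes `E₃`.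
The element `e₁₃ = E₁E₃` satisfies `e₁₃² = α`, `e₁₃ e₁₂ = -e₁₂ e₁₃`, and conjugation by it is
`(w, s) ↦ (-w̄, -s)`. These are exactly the defining relations of `O₂(α)`, so
`(z, t) ↦ (x + y e₁₂) e₁₃ᵗ` is a homomorphism. It is injective because `ℂ` embeds, while every
element `(z, 1̂)` acts nontrivially, negating `E₃`.
-/

namespace Tw

variable {A M : Type*} [CommGroup A] {τ : A →* A} {a₀ : A}
  [Fact (∀ a : A, τ (τ a) = a)] [Fact (τ a₀ = a₀)] [Monoid M]

def lift (f : A →* M) (v : M) (hvf : ∀ a, v * f a = f (τ a) * v) (hv : v * v = f a₀) :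
    Tw A τ a₀ →* M where
  toFun g := f g.z * if g.t = 1 then v else 1
  map_one' := by simp
  map_mul' := by
    rintro ⟨z₁, t₁⟩ ⟨z₂, t₂⟩
    rcases zmod2_cases t₁ with rfl | rfl <;> rcases zmod2_cases t₂ with rfl | rfl
    · simp
    · simp [mul_assoc]
    · simp [mul_assoc, hvf]
    · have key : f z₁ * v * (f z₂ * v) = f (a₀ * z₁ * τ z₂) := by
        simp only [mul_assoc]
        rw [← mul_assoc v (f z₂), hvf, mul_assoc, hv, ← map_mul, ← map_mul]
        congr 1; ac_rfl
      simpa [-map_mul] using key.symm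

@[simp] lemma lift_mk_zero (f : A →* M) (v : M) (hvf : ∀ a, v * f a = f (τ a) * v)
    (hv : v * v = f a₀) (z : A) : lift f v hvf hv ⟨z, 0⟩ = f z := by
  simp [lift]

@[simp] lemma lift_mk_one (f : A →* M) (v : M) (hvf : ∀ a, v * f a = f (τ a) * v)
    (hv : v * v = f a₀) (z : A) : lift f v hvf hv ⟨z, 1⟩ = f z * v := by
  simp [lift]

omit [Fact (∀ a : A, τ (τ a) = a)] [Fact (τ a₀ = a₀)] in
lemma mk_zero_inv (z : A) : (⟨z, 0⟩ : Tw A τ a₀)⁻¹ = ⟨z⁻¹, 0⟩ := by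
  ext <;> simp

omit [Fact (∀ a : A, τ (τ a) = a)] [Fact (τ a₀ = a₀)] in
lemma mk_one_eq_mk_zero_mul (z : A) : (⟨z, 1⟩ : Tw A τ a₀) = ⟨z, 0⟩ * ⟨1, 1⟩ := by
  ext <;> simp

end Tw

open CliffordAlgebra ComplexConjugate

theorem CliffordAlgebra.ι_injective_of_invertible_two {R M : Type*} [CommRing R] [AddCommGroup M]
    [Module R M] [Invertible (2 : R)] (Q : QuadraticForm R M) : Function.Injective (ι Q) := by
  intro a b h
  simpa [equivExterior, changeFormEquiv, changeForm_ι, ExteriorAlgebra.ι_inj] using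
    congrArg (equivExterior Q) h

lemma coe_sgnC (α : ℤˣ) : (sgnC α : ℂ) = ((α : ℝ) : ℂ) := by
  rcases Int.units_eq_one_or α with rfl | rfl <;> simp [sgnC]

noncomputable section

namespace O2Spin

/-- On the circle `twist α z = z^{-α}`, so `twist α (z ^ 2)` is the paper's `z^{-2α}`. -/
def twist (α : ℤˣ) (c : ℂ) : ℂ := if α = 1 then conj c else c

lemma twist_I (α : ℤˣ) : twist α I = -((α : ℝ) : ℂ) * I := by
  rcases Int.units_eq_one_or α with rfl | rfl <;> simp [twist]

lemma twist_eq_re_add_im_mul (α : ℤˣ) (c : ℂ) : twist α c = c.re + c.im * twist α I := by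
  unfold twist
  split_ifs
  · apply Complex.ext <;> simp
  · exact (Complex.re_add_im c).symm

lemma units_int_cast_mul_self (α : ℤˣ) : (α : ℝ) * α = 1 := by
  rcases Int.units_eq_one_or α with rfl | rfl <;> norm_num

variable {α : ℤˣ} {Q : QuadraticForm ℝ (ℂ × ℝ)}

lemma ι_plane_eq (w : ℂ) : ι Q (w, 0) = w.re • ι Q (1, 0) + w.im • ι Q (I, 0) := by
  rw [← map_smul, ← map_smul, ← map_add]
  congr 1
  ext <;> simp

lemma ι_mk_eq_ι_plane_add (w : ℂ) (s : ℝ) : ι Q (w, s) = ι Q (w, 0) + s • ι Q (0, 1) := by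
  rw [← map_smul, ← map_add]
  congr 1
  ext <;> simp

def e₁₂ (Q : QuadraticForm ℝ (ℂ × ℝ)) : CliffordAlgebra Q := ι Q (1, 0) * ι Q (I, 0)

def e₁₃ (Q : QuadraticForm ℝ (ℂ × ℝ)) : CliffordAlgebra Q := ι Q (1, 0) * ι Q (0, 1)

variable (hQ : ∀ (w : ℂ) (s : ℝ), Q (w, s) = (α : ℝ) * Complex.normSq w - s ^ 2)
include hQ

lemma isOrtho_plane_axis (w : ℂ) (s : ℝ) : Q.IsOrtho (w, 0) (0, s) := by
  simp [QuadraticMap.isOrtho_def, hQ, sub_eq_add_neg]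

lemma isOrtho_one_I : Q.IsOrtho (1, 0) (I, 0) := by
  simp [QuadraticMap.isOrtho_def, hQ, Complex.normSq_apply, mul_add]

lemma ι_plane_mul_self (w : ℂ) :
    ι Q (w, 0) * ι Q (w, 0) = algebraMap ℝ _ (α * Complex.normSq w) := by
  simp [ι_sq_scalar, hQ]

lemma ι_axis_mul_self : ι Q (0, 1) * ι Q (0, 1) = -1 := by
  simp [ι_sq_scalar, hQ]

lemma ι_one_mul_self : ι Q (1, 0) * ι Q (1, 0) = algebraMap ℝ _ α := by
  simp [ι_plane_mul_self hQ]

lemma ι_I_mul_self : ι Q (I, 0) * ι Q (I, 0) = algebraMap ℝ _ α := by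
  simp [ι_plane_mul_self hQ]

lemma e₁₂_mul_self : e₁₂ Q * e₁₂ Q = -1 := by
  calc e₁₂ Q * e₁₂ Q = -(ι Q (1, 0) * ι Q (1, 0) * (ι Q (I, 0) * ι Q (I, 0))) := by
        rw [e₁₂, mul_assoc, ← mul_assoc (ι Q (I, 0)),
          ι_mul_ι_comm_of_isOrtho (isOrtho_one_I hQ).symm]
        noncomm_ring
    _ = -1 := by
        rw [ι_one_mul_self hQ, ι_I_mul_self hQ, ← map_mul, units_int_cast_mul_self, map_one]

lemma e₁₂_mul_ι_plane (w : ℂ) : e₁₂ Q * ι Q (w, 0) = ι Q (twist α I * w, 0) := by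
  have h₁ : e₁₂ Q * ι Q (1, 0) = -(α : ℝ) • ι Q (I, 0) := by
    rw [e₁₂, mul_assoc, ι_mul_ι_comm_of_isOrtho (isOrtho_one_I hQ).symm, mul_neg, ← mul_assoc,
      ι_one_mul_self hQ, ← Algebra.smul_def, neg_smul]
  have h₂ : e₁₂ Q * ι Q (I, 0) = (α : ℝ) • ι Q (1, 0) := by
    rw [e₁₂, mul_assoc, ι_I_mul_self hQ, ← Algebra.commutes, ← Algebra.smul_def]
  rw [ι_plane_eq w, ι_plane_eq (twist α I * w), mul_add, mul_smul_comm, mul_smul_comm, h₁, h₂,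
    twist_I]
  simp only [neg_mul, neg_re, neg_im, mul_re, mul_im, ofReal_re, ofReal_im, I_re, I_im]
  module

lemma ι_plane_mul_e₁₂ (w : ℂ) : ι Q (w, 0) * e₁₂ Q = -(e₁₂ Q * ι Q (w, 0)) := by
  have h₁ : ι Q (1, 0) * e₁₂ Q = -(e₁₂ Q * ι Q (1, 0)) := by
    rw [e₁₂, mul_ι_mul_ι_of_isOrtho _ (isOrtho_one_I hQ).symm, mul_assoc, neg_neg]
  have h₂ : ι Q (I, 0) * e₁₂ Q = -(e₁₂ Q * ι Q (I, 0)) := by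
    rw [e₁₂, ι_mul_ι_mul_of_isOrtho _ (isOrtho_one_I hQ).symm, mul_assoc]
  rw [ι_plane_eq w, add_mul, mul_add, smul_mul_assoc, smul_mul_assoc, mul_smul_comm, mul_smul_comm,
    h₁, h₂, smul_neg, smul_neg, neg_add]

lemma e₁₂_commute_ι_axis (s : ℝ) : Commute (e₁₂ Q) (ι Q (0, s)) := by
  rw [Commute, SemiconjBy, e₁₂, mul_assoc, ι_mul_ι_comm_of_isOrtho (isOrtho_plane_axis hQ I s),
    mul_neg, ← mul_assoc, ι_mul_ι_comm_of_isOrtho (isOrtho_plane_axis hQ 1 s), neg_mul, neg_neg,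
    mul_assoc]

def ofComplex : ℂ →ₐ[ℝ] CliffordAlgebra Q := Complex.liftAux (e₁₂ Q) (e₁₂_mul_self hQ)

lemma ofComplex_apply (z : ℂ) : ofComplex hQ z = algebraMap ℝ _ z.re + z.im • e₁₂ Q :=
  Complex.liftAux_apply _ _ z

lemma ι_plane_mul_ofComplex (w z : ℂ) :
    ι Q (w, 0) * ofComplex hQ z = ofComplex hQ (conj z) * ι Q (w, 0) := by
  rw [ofComplex_apply, ofComplex_apply, conj_re, conj_im, mul_add, add_mul, Algebra.commutes,
    mul_smul_comm, smul_mul_assoc, ι_plane_mul_e₁₂ hQ, smul_neg, neg_smul]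

lemma commute_ofComplex_ι_axis (z : ℂ) (s : ℝ) : Commute (ofComplex hQ z) (ι Q (0, s)) := by
  rw [ofComplex_apply]
  exact (Algebra.commute_algebraMap_left _ _).add_left ((e₁₂_commute_ι_axis hQ s).smul_left _)

lemma ofComplex_mul_ι_plane (c w : ℂ) :
    ofComplex hQ c * ι Q (w, 0) = ι Q (twist α c * w, 0) := by
  rw [ofComplex_apply, add_mul, smul_mul_assoc, e₁₂_mul_ι_plane hQ, ← Algebra.smul_def,
    ← map_smul, ← map_smul, ← map_add, twist_eq_re_add_im_mul α c]
  refine congrArg _ (Prod.ext ?_ (by simp))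
  simp only [Prod.fst_add, Prod.smul_fst, real_smul]
  ring

lemma ofComplex_mul_ι_mul_ofComplex_conj (z : Circle) (w : ℂ) (s : ℝ) :
    ofComplex hQ z * ι Q (w, s) * ofComplex hQ (conj (z : ℂ)) =
      ι Q (twist α ((z : ℂ) ^ 2) * w, s) := by
  have hz : (z : ℂ) * conj (z : ℂ) = 1 := by rw [mul_conj, Circle.normSq_coe, ofReal_one]
  rw [ι_mk_eq_ι_plane_add, mul_add, add_mul, mul_assoc (ofComplex hQ z), ι_plane_mul_ofComplex,
    conj_conj, ← mul_assoc, ← map_mul, ← sq, ofComplex_mul_ι_plane, mul_smul_comm, smul_mul_assoc,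
    (commute_ofComplex_ι_axis hQ z 1).eq, mul_assoc, ← map_mul, hz, map_one, mul_one,
    ← ι_mk_eq_ι_plane_add]

lemma e₁₃_mul_self : e₁₃ Q * e₁₃ Q = algebraMap ℝ _ α := by
  calc e₁₃ Q * e₁₃ Q = -(ι Q (1, 0) * ι Q (1, 0) * (ι Q (0, 1) * ι Q (0, 1))) := by
        rw [e₁₃, mul_assoc, ← mul_assoc (ι Q (0, 1)),
          ι_mul_ι_comm_of_isOrtho (isOrtho_plane_axis hQ 1 1).symm]
        noncomm_ring
    _ = algebraMap ℝ _ α := by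
        rw [ι_one_mul_self hQ, ι_axis_mul_self hQ, mul_neg_one, neg_neg]

lemma e₁₃_mul_ofComplex (z : ℂ) : e₁₃ Q * ofComplex hQ z = ofComplex hQ (conj z) * e₁₃ Q := by
  rw [e₁₃, mul_assoc, ← (commute_ofComplex_ι_axis hQ z 1).eq, ← mul_assoc, ι_plane_mul_ofComplex,
    mul_assoc]

lemma ι_one_mul_ι_plane (w : ℂ) : ι Q (1, 0) * ι Q (w, 0) = ι Q (conj w, 0) * ι Q (1, 0) := by
  rw [ι_plane_eq w, ι_plane_eq (conj w), conj_re, conj_im, mul_add, add_mul, mul_smul_comm,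
    mul_smul_comm, smul_mul_assoc, smul_mul_assoc, ι_mul_ι_comm_of_isOrtho (isOrtho_one_I hQ),
    neg_smul, smul_neg]

lemma e₁₃_mul_ι (w : ℂ) (s : ℝ) : e₁₃ Q * ι Q (w, s) = ι Q (-conj w, -s) * e₁₃ Q := by
  rw [ι_mk_eq_ι_plane_add w, ι_mk_eq_ι_plane_add (-conj w), mul_add, add_mul]
  congr 1
  · rw [e₁₃, mul_assoc, ι_mul_ι_comm_of_isOrtho (isOrtho_plane_axis hQ w 1).symm, mul_neg,
      ← mul_assoc, ι_one_mul_ι_plane hQ, show ((-conj w, 0) : ℂ × ℝ) = -(conj w, 0) by simp,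
      map_neg, neg_mul, mul_assoc]
  · rw [mul_smul_comm, smul_mul_assoc, neg_smul, e₁₃, ← smul_neg]
    congr 1
    rw [mul_assoc, ← mul_assoc (ι Q (0, 1)),
      ι_mul_ι_comm_of_isOrtho (isOrtho_plane_axis hQ 1 1).symm, neg_mul, neg_neg, mul_assoc]

lemma ofComplex_mem_evenOdd_zero (z : ℂ) : ofComplex hQ z ∈ evenOdd Q 0 := by
  rw [ofComplex_apply]
  exact add_mem (SetLike.algebraMap_mem_graded _ _)
    (Submodule.smul_mem _ _ (ι_mul_ι_mem_evenOdd_zero Q _ _))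

def spinRep : O2 α →* (CliffordAlgebra Q)ˣ :=
  MonoidHom.toHomUnits <|
    Tw.lift ((ofComplex hQ : ℂ →* CliffordAlgebra Q).comp Circle.coeHom) (e₁₃ Q)
      (fun z => e₁₃_mul_ofComplex hQ z)
      (by
        show _ = ofComplex hQ (sgnC α : ℂ)
        rw [e₁₃_mul_self hQ, coe_sgnC, AlgHom.map_coe_real_complex])

lemma spinRep_mk_zero (z : Circle) : (spinRep hQ ⟨z, 0⟩ : CliffordAlgebra Q) = ofComplex hQ z :=
  Tw.lift_mk_zero _ _ _ _ z

lemma spinRep_mk_one (z : Circle) :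
    (spinRep hQ ⟨z, 1⟩ : CliffordAlgebra Q) = ofComplex hQ z * e₁₃ Q :=
  Tw.lift_mk_one _ _ _ _ z

lemma spinRep_mem_evenOdd_zero (g : O2 α) : (spinRep hQ g : CliffordAlgebra Q) ∈ evenOdd Q 0 := by
  obtain ⟨z, t⟩ := g
  rcases Tw.zmod2_cases t with rfl | rfl
  · rw [spinRep_mk_zero]
    exact ofComplex_mem_evenOdd_zero hQ z
  · rw [spinRep_mk_one]
    simpa [e₁₃] using SetLike.mul_mem_graded (ofComplex_mem_evenOdd_zero hQ z)
      (ι_mul_ι_mem_evenOdd_zero Q (1, 0) (0, 1))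

lemma spinRep_mk_zero_conj (z : Circle) (w : ℂ) (s : ℝ) :
    (spinRep hQ ⟨z, 0⟩ : CliffordAlgebra Q) * ι Q (w, s) * ↑(spinRep hQ ⟨z, 0⟩)⁻¹ =
      ι Q (twist α ((z : ℂ) ^ 2) * w, s) := by
  rw [← map_inv, Tw.mk_zero_inv, spinRep_mk_zero, spinRep_mk_zero, Circle.coe_inv_eq_conj,
    ofComplex_mul_ι_mul_ofComplex_conj]

lemma spinRep_mk_one_conj (z : Circle) (w : ℂ) (s : ℝ) :
    (spinRep hQ ⟨z, 1⟩ : CliffordAlgebra Q) * ι Q (w, s) * ↑(spinRep hQ ⟨z, 1⟩)⁻¹ =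
      ι Q (-(twist α ((z : ℂ) ^ 2) * conj w), -s) := by
  have h₁₁ : (spinRep hQ ⟨1, 1⟩ : CliffordAlgebra Q) * ι Q (w, s) * ↑(spinRep hQ ⟨1, 1⟩)⁻¹ =
      ι Q (-conj w, -s) := by
    rw [Units.mul_inv_eq_iff_eq_mul, spinRep_mk_one, Circle.coe_one, map_one, one_mul,
      e₁₃_mul_ι hQ]
  have hconj (u v : (CliffordAlgebra Q)ˣ) (x : CliffordAlgebra Q) :
      ↑(u * v) * x * ↑(u * v)⁻¹ = ↑u * (↑v * x * ↑v⁻¹) * ↑u⁻¹ := by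
    simp only [Units.val_mul, mul_inv_rev, mul_assoc]
  rw [Tw.mk_one_eq_mk_zero_mul, map_mul, hconj, h₁₁, spinRep_mk_zero_conj, mul_neg]

lemma spinRep_injective : Function.Injective (spinRep hQ) := by
  rw [injective_iff_map_eq_one]
  rintro ⟨z, t⟩ h
  rcases Tw.zmod2_cases t with rfl | rfl
  · have hz : ofComplex hQ z = ofComplex hQ 1 := by
      rw [← spinRep_mk_zero, h, Units.val_one, map_one]
    ext
    · exact (ofComplex hQ).toRingHom.injective hz
    · rfl
  · have h₁ := spinRep_mk_one_conj hQ z 0 1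
    rw [h, Units.val_one, inv_one, Units.val_one, mul_one, one_mul] at h₁
    have := congrArg Prod.snd (ι_injective_of_invertible_two Q h₁)
    norm_num at this

end O2Spin

end

open CliffordAlgebra in
/-- `O₂(α) ≅ Pin₂(α)` is realized as the spin group `Spin₃(α)` inside the Clifford algebra
of `Q'₃(w,s) = α·|w|² − s²` on `ℂ × ℝ`: there is an injective group homomorphism `ψ_α` into
the units, landing in the even part, with `ψ_α(z,0̂) = x + y·E₁E₂`,
`ψ_α(z,1̂) = (x + y·E₁E₂)·E₁E₃` for `z = x + iy`, whose conjugation action on vectors is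
`ι(w,s) ↦ ι(z^{−2α}·w, s)` resp. `ι(w,s) ↦ ι(−z^{−2α}·conj(w), −s)`. -/
theorem O2_realized_as_spin3 (α : ℤˣ) (Q' : QuadraticForm ℝ (ℂ × ℝ))
    (hQ' : ∀ (w : ℂ) (s : ℝ), Q' (w, s) = (α : ℝ) * Complex.normSq w - s ^ 2) :
    ∃ ψ : O2 α →* (CliffordAlgebra Q')ˣ,
      Function.Injective ψ ∧
      (∀ z : Circle, ((ψ ⟨z, 0⟩ : (CliffordAlgebra Q')ˣ) : CliffordAlgebra Q') =
        algebraMap ℝ (CliffordAlgebra Q') (z : ℂ).re +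
          (z : ℂ).im • (ι Q' (1, 0) * ι Q' (Complex.I, 0))) ∧
      (∀ z : Circle, ((ψ ⟨z, 1⟩ : (CliffordAlgebra Q')ˣ) : CliffordAlgebra Q') =
        (algebraMap ℝ (CliffordAlgebra Q') (z : ℂ).re +
          (z : ℂ).im • (ι Q' (1, 0) * ι Q' (Complex.I, 0))) *
          (ι Q' (1, 0) * ι Q' (0, 1))) ∧
      (∀ g : O2 α, ((ψ g : (CliffordAlgebra Q')ˣ) : CliffordAlgebra Q') ∈ evenOdd Q' 0) ∧
      (∀ (z : Circle) (w : ℂ) (s : ℝ),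
        (((ψ ⟨z, 0⟩ : (CliffordAlgebra Q')ˣ) : CliffordAlgebra Q') * ι Q' (w, s) *
            (((ψ ⟨z, 0⟩)⁻¹ : (CliffordAlgebra Q')ˣ) : CliffordAlgebra Q') =
          ι Q' ((if α = 1 then (starRingEnd ℂ) (z : ℂ) ^ 2 else (z : ℂ) ^ 2) * w, s)) ∧
        (((ψ ⟨z, 1⟩ : (CliffordAlgebra Q')ˣ) : CliffordAlgebra Q') * ι Q' (w, s) *
            (((ψ ⟨z, 1⟩)⁻¹ : (CliffordAlgebra Q')ˣ) : CliffordAlgebra Q') =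
          ι Q' (-((if α = 1 then (starRingEnd ℂ) (z : ℂ) ^ 2 else (z : ℂ) ^ 2) *
            (starRingEnd ℂ) w), -s))) := by
  have hpow (z : Circle) :
      O2Spin.twist α ((z : ℂ) ^ 2) = if α = 1 then conj (z : ℂ) ^ 2 else (z : ℂ) ^ 2 := by
    simp only [O2Spin.twist, map_pow]
  refine ⟨O2Spin.spinRep hQ', O2Spin.spinRep_injective hQ', fun z => ?_, fun z => ?_,
    O2Spin.spinRep_mem_evenOdd_zero hQ', fun z w s => ⟨?_, ?_⟩⟩
  · rw [O2Spin.spinRep_mk_zero, O2Spin.ofComplex_apply, O2Spin.e₁₂]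
  · rw [O2Spin.spinRep_mk_one, O2Spin.ofComplex_apply, O2Spin.e₁₂, O2Spin.e₁₃]
  · rw [O2Spin.spinRep_mk_zero_conj, hpow]
  · rw [O2Spin.spinRep_mk_one_conj, hpow]
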